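/- arXiv:2604.21260 — 7 statements merged into one kernel-verified Lean document; each statement's English description precedes it below -/
import Mathlib

section
/- Let F be a set of functions from ℝ to ℝ containing the identity map, and suppose the calibrated score m* : 𝒳 → ℝ satisfies P^L_n[f(m*(X))·(Y − m*(X))] = 0 for every f ∈ F. Suppose further that ŵ* ∈ F satisfies the balance condition P^L_n[ŵ*(m*(X))·f(m*(X))] = ρ_n P^L_n{f(m*(X))} + (1−ρ_n) P^U_N{f(m*(X̃))} for every f ∈ F. Then the calibrated plug-in estimator admits the balancing-weight representation: ρ_n P^L_n{m*(X)} + (1−ρ_n) P^U_N{m*(X̃)} = P^L_n[ŵ*(m*(X))·Y] = (1/n)∑_{i=1}^n ŵ*(m*(X_i))·Y_i. -/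
open Finset

/-- Balancing-weight representation of the calibrated plug-in estimator:
if `mstar` is empirically calibrated over a class `F` containing the identity,
and `wstar ∈ F` balances every `f ∈ F` between the labeled and pooled samples,
then the calibrated plug-in estimator is a weighted average of the labeled
outcomes. -/
theorem calibrated_plugin_balancing_weight_representation
    {𝒳 : Type*} (n N : ℕ) (hn : 1 ≤ n) (hN : 1 ≤ N)
    (X : Fin n → 𝒳) (Y : Fin n → ℝ) (Xt : Fin N → 𝒳)
    (F : Set (ℝ → ℝ)) (hid : (fun t : ℝ => t) ∈ F)
    (mstar : 𝒳 → ℝ)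
    (hcal : ∀ f ∈ F,
      (1 / (n : ℝ)) * ∑ i, f (mstar (X i)) * (Y i - mstar (X i)) = 0)
    (wstar : ℝ → ℝ) (hw : wstar ∈ F)
    (hbal : ∀ f ∈ F,
      (1 / (n : ℝ)) * ∑ i, wstar (mstar (X i)) * f (mstar (X i))
      = ((n : ℝ) / (n + N)) * ((1 / (n : ℝ)) * ∑ i, f (mstar (X i)))
        + (1 - (n : ℝ) / (n + N)) * ((1 / (N : ℝ)) * ∑ j, f (mstar (Xt j)))) :
    ((n : ℝ) / (n + N)) * ((1 / (n : ℝ)) * ∑ i, mstar (X i))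
      + (1 - (n : ℝ) / (n + N)) * ((1 / (N : ℝ)) * ∑ j, mstar (Xt j))
    = (1 / (n : ℝ)) * ∑ i, wstar (mstar (X i)) * Y i := by
  have h1 := hbal _ hid
  have h2 := hcal _ hw
  rw [← h1]
  have : ∑ i, wstar (mstar (X i)) * Y i
      = ∑ i, wstar (mstar (X i)) * mstar (X i) := by
    have hsum : ∑ i, wstar (mstar (X i)) * (Y i - mstar (X i)) = 0 := by
      have hn0 : (1 / (n : ℝ)) ≠ 0 := by
        positivity
      exact (mul_eq_zero.mp h2).resolve_left hn0
    have := hsum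
    simp only [mul_sub] at this
    rw [Finset.sum_sub_distrib] at this
    linarith
  rw [this]
end

section
/- Isotonic calibration is fully empirically calibrated: Let T_1,…,T_n ∈ ℝ be the prediction scores T_i = m(X_i), and let f̂ be a minimizer of ∑_{i=1}^n (Y_i − f(T_i))² over all nondecreasing functions f : ℝ → ℝ; set m*_i := f̂(T_i). Then: (i) for every function h : ℝ → ℝ, ∑_{i=1}^n h(m*_i)·(Y_i − m*_i) = 0; (ii) for every nondecreasing function θ : ℝ → ℝ, ∑_{i=1}^n (Y_i − m*_i)² ≤ ∑_{i=1}^n (Y_i − θ(T_i))²; in particular, ∑_{i=1}^n (Y_i − m*_i)² ≤ ∑_{i=1}^n (Y_i − T_i)². -/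
/-!
Perturb the fitted values `v ↦ v + ε * h v`. On the finitely many fitted values this map stays
strictly monotone for all small `ε` of either sign, and a function monotone on finitely many
points extends to a monotone function on `ℝ`; so the perturbed fit competes with `fhat`. Hence
`ε = 0` is a local minimum of the perturbed loss, and its vanishing derivative is the
orthogonality of the residuals to `h ∘ fhat`. The remaining claims are the minimality of `fhat`
itself, with `θ = id` for the last one.
-/

open Finset Filter Set Topology

lemma Set.Finite.eventually_strictMonoOn_add_mul {V : Set ℝ} (hV : V.Finite) (g : ℝ → ℝ) :
    ∀ᶠ ε in 𝓝 (0 : ℝ), StrictMonoOn (fun x => x + ε * g x) V := by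
  simp only [StrictMonoOn, hV.eventually_all]
  intro a _ b _
  by_cases hab : a < b
  · have hcont : Continuous fun ε : ℝ => (b + ε * g b) - (a + ε * g a) := by fun_prop
    have hpos : (0 : ℝ) < b + 0 * g b - (a + 0 * g a) := by simpa using hab
    filter_upwards [(hcont.tendsto 0).eventually (lt_mem_nhds hpos)] with ε hε _
    linarith
  · exact Eventually.of_forall fun _ h => absurd h hab

lemma sum_mul_eq_zero_of_isLocalMin {ι : Type*} (s : Finset ι) (r a : ι → ℝ)
    (hloc : IsLocalMin (fun ε : ℝ => ∑ i ∈ s, (r i - ε * a i) ^ 2) 0) :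
    ∑ i ∈ s, a i * r i = 0 := by
  have hderiv : HasDerivAt (fun ε : ℝ => ∑ i ∈ s, (r i - ε * a i) ^ 2)
      (-2 * ∑ i ∈ s, a i * r i) 0 := by
    refine (HasDerivAt.fun_sum fun i _ =>
      (((hasDerivAt_id' (0 : ℝ)).mul_const (a i)).const_sub (r i)).fun_pow 2).congr_deriv ?_
    rw [mul_sum]
    exact sum_congr rfl fun i _ => by norm_num; ring
  linarith [hloc.hasDerivAt_eq_zero hderiv]

lemma sum_sq_le_of_monotoneOn_range {ι : Type*} [Fintype ι] (Y T : ι → ℝ) {f₀ : ℝ → ℝ}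
    (hmin : ∀ f : ℝ → ℝ, Monotone f →
      ∑ i, (Y i - f₀ (T i)) ^ 2 ≤ ∑ i, (Y i - f (T i)) ^ 2)
    {g : ℝ → ℝ} (hg : MonotoneOn g (range T)) :
    ∑ i, (Y i - f₀ (T i)) ^ 2 ≤ ∑ i, (Y i - g (T i)) ^ 2 := by
  have hfin : (g '' range T).Finite := (finite_range T).image g
  obtain ⟨f, hf, hgf⟩ := hg.exists_monotone_extension hfin.bddBelow hfin.bddAbove
  calc ∑ i, (Y i - f₀ (T i)) ^ 2 ≤ ∑ i, (Y i - f (T i)) ^ 2 := hmin f hf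
    _ = ∑ i, (Y i - g (T i)) ^ 2 := by simp only [hgf (mem_range_self _)]

lemma sum_mul_sub_eq_zero_of_isotonic {ι : Type*} [Fintype ι] (Y T : ι → ℝ) {f₀ : ℝ → ℝ}
    (hmono : Monotone f₀)
    (hmin : ∀ f : ℝ → ℝ, Monotone f →
      ∑ i, (Y i - f₀ (T i)) ^ 2 ≤ ∑ i, (Y i - f (T i)) ^ 2)
    (h : ℝ → ℝ) : ∑ i, h (f₀ (T i)) * (Y i - f₀ (T i)) = 0 := by
  refine sum_mul_eq_zero_of_isLocalMin univ (fun i => Y i - f₀ (T i)) (fun i => h (f₀ (T i))) ?_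
  have hV : (f₀ '' range T).Finite := (finite_range T).image f₀
  filter_upwards [hV.eventually_strictMonoOn_add_mul h] with ε hε
  have hg : MonotoneOn ((fun x => x + ε * h x) ∘ f₀) (range T) :=
    hε.monotoneOn.comp (hmono.monotoneOn _) (mapsTo_image f₀ _)
  simpa [sub_sub] using sum_sq_le_of_monotoneOn_range Y T hmin hg

theorem isotonic_calibration_fully_calibrated_general
    {𝒳 : Type*} (n : ℕ) (Y : Fin n → ℝ)
    (X : Fin n → 𝒳) (m : 𝒳 → ℝ)
    (fhat : ℝ → ℝ) (hmono : Monotone fhat)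
    (hmin : ∀ f : ℝ → ℝ, Monotone f →
      ∑ i, (Y i - fhat (m (X i))) ^ 2 ≤ ∑ i, (Y i - f (m (X i))) ^ 2) :
    (∀ h : ℝ → ℝ,
      ∑ i, h (fhat (m (X i))) * (Y i - fhat (m (X i))) = 0)
    ∧ (∀ θ : ℝ → ℝ, Monotone θ →
      ∑ i, (Y i - fhat (m (X i))) ^ 2 ≤ ∑ i, (Y i - θ (m (X i))) ^ 2)
    ∧ ∑ i, (Y i - fhat (m (X i))) ^ 2 ≤ ∑ i, (Y i - m (X i)) ^ 2 :=
  ⟨sum_mul_sub_eq_zero_of_isotonic Y (fun i => m (X i)) hmono hmin, hmin, hmin id monotone_id⟩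

/-- Isotonic calibration is fully empirically calibrated: if `fhat` minimizes
the empirical squared loss over all nondecreasing functions, then (i) the
residuals are orthogonal to every transformation of the fitted values, and
(ii) the fitted score has empirical squared error no larger than any monotone
transformation of the original score; in particular no larger than the
original score itself. -/
theorem isotonic_calibration_fully_calibrated
    {𝒳 : Type*} (n : ℕ) (hn : 1 ≤ n) (Y : Fin n → ℝ)
    (X : Fin n → 𝒳) (m : 𝒳 → ℝ)
    (fhat : ℝ → ℝ) (hmono : Monotone fhat)
    (hmin : ∀ f : ℝ → ℝ, Monotone f →
      ∑ i, (Y i - fhat (m (X i))) ^ 2 ≤ ∑ i, (Y i - f (m (X i))) ^ 2) :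
    (∀ h : ℝ → ℝ,
      ∑ i, h (fhat (m (X i))) * (Y i - fhat (m (X i))) = 0)
    ∧ (∀ θ : ℝ → ℝ, Monotone θ →
      ∑ i, (Y i - fhat (m (X i))) ^ 2 ≤ ∑ i, (Y i - θ (m (X i))) ^ 2)
    ∧ ∑ i, (Y i - fhat (m (X i))) ^ 2 ≤ ∑ i, (Y i - m (X i)) ^ 2 :=
  isotonic_calibration_fully_calibrated_general n Y X m fhat hmono hmin
end

section
/- Exact difference between PPI++ and linear calibration: Let (â, b̂) ∈ ℝ² satisfy the least-squares normal equations ∑_{i=1}^n (Y_i − â·m(X_i) − b̂) = 0 and ∑_{i=1}^n m(X_i)·(Y_i − â·m(X_i) − b̂) = 0, set m*_lin(x) := â·m(x) + b̂ and ψ̂_lin := ρ_n P^L_n{m*_lin(X)} + (1−ρ_n) P^U_N{m*_lin(X̃)}. For λ ∈ ℝ define the rescaled AIPW estimator ψ̂_++(λ) := ρ_n P^L_n{λ·m(X)} + (1−ρ_n) P^U_N{λ·m(X̃)} + P^L_n{Y − λ·m(X)}, and set Δ_n := P^U_N{m(X̃)} − P^L_n{m(X)}. Then for every λ̂ ∈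 ℝ, ψ̂_++(λ̂) − ψ̂_lin = (1−ρ_n)·(λ̂ − â)·Δ_n. -/
open Finset

/-- Exact difference between PPI++ (the rescaled AIPW estimator at any
coefficient `λ̂`) and the linearly calibrated plug-in estimator:
`ψ̂_++(λ̂) − ψ̂_lin = (1−ρ_n)·(λ̂ − â)·Δ_n`, where
`Δ_n = P^U_N{m(X̃)} − P^L_n{m(X)}`. -/
theorem ppi_plus_plus_minus_linear_calibration
    {𝒳 : Type*} (n N : ℕ) (hn : 1 ≤ n) (hN : 1 ≤ N)
    (X : Fin n → 𝒳) (Y : Fin n → ℝ) (Xt : Fin N → 𝒳) (m : 𝒳 → ℝ)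
    (ahat bhat : ℝ)
    (hnorm1 : ∑ i, (Y i - ahat * m (X i) - bhat) = 0)
    (hnorm2 : ∑ i, m (X i) * (Y i - ahat * m (X i) - bhat) = 0) :
    ∀ lam : ℝ,
      (((n : ℝ) / (n + N)) * ((1 / (n : ℝ)) * ∑ i, lam * m (X i))
        + (1 - (n : ℝ) / (n + N)) * ((1 / (N : ℝ)) * ∑ j, lam * m (Xt j))
        + (1 / (n : ℝ)) * ∑ i, (Y i - lam * m (X i)))
      - (((n : ℝ) / (n + N)) * ((1 / (n : ℝ)) * ∑ i, (ahat * m (X i) + bhat))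
        + (1 - (n : ℝ) / (n + N)) *
            ((1 / (N : ℝ)) * ∑ j, (ahat * m (Xt j) + bhat)))
      = (1 - (n : ℝ) / (n + N)) * (lam - ahat) *
          ((1 / (N : ℝ)) * ∑ j, m (Xt j) - (1 / (n : ℝ)) * ∑ i, m (X i)) := by
  intro lam
  have hn0 : (n : ℝ) ≠ 0 := by positivity
  have hN0 : (N : ℝ) ≠ 0 := by positivity
  have hnN : (n : ℝ) + N ≠ 0 := by positivity
  have hY : ∑ i, Y i = ahat * ∑ i, m (X i) + n * bhat := by
    have := hnorm1
    simp [Finset.sum_sub_distrib, ← Finset.mul_sum] at this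
    linarith
  simp only [Finset.sum_sub_distrib, Finset.sum_add_distrib, ← Finset.mul_sum,
    Finset.sum_const, Finset.card_univ, Fintype.card_fin, nsmul_eq_mul, hY]
  field_simp
  ring
end

section
/- Asymptotic-variance formula for the AIPW class (population identity): Let (Ω, 𝓐, P) be a probability space, X : Ω → 𝒳 a random variable into a measurable space, Y : Ω → ℝ square-integrable, and let μ₀ be a version of the conditional expectation E[Y | σ(X)]. Let ρ₀ ∈ (0,1), let f : 𝒳 → ℝ be measurable with f(X) square-integrable, and set f̃ := f(X) − E[f(X)] + E[Y], ψ₀ := E[Y]. Define D^L := f̃ − ψ₀ + ρ₀⁻¹·(Y − f̃). Then ρ₀·Var[D^L] + (1−ρ₀)·Var[f̃] = Var[μ₀] + ρ₀⁻¹·E[(Y − μ₀)²] + ((1−ρ₀)/ρ₀)·E[(f̃ − μ₀)²]. -/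
/-!
Write `U = f̃ - ψ₀`, `M = μ₀ - ψ₀` and `R = Y - μ₀`. Then `D^L = V + ρ₀⁻¹ R` with
`V = (1 - ρ₀⁻¹) U + ρ₀⁻¹ M` a square-integrable `σ(X)`-measurable function, and the residual
`R` is orthogonal in `L²` to every such function, so `Var[D^L] = E[V²] + ρ₀⁻² E[R²]`.
What remains, `ρ₀ V² + (1 - ρ₀) U² = M² + ((1 - ρ₀) / ρ₀) (U - M)²`, is a pointwise identity.
-/

open MeasureTheory ProbabilityTheory

section

variable {Ω : Type*} {m m₀ : MeasurableSpace Ω} {μ : Measure Ω}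

lemma integral_mul_sub_condExp_eq_zero (hm : m ≤ m₀) [SigmaFinite (μ.trim hm)] {g Y : Ω → ℝ}
    (hg : AEStronglyMeasurable[m] g μ) (hgY : Integrable (g * Y) μ) (hY : Integrable Y μ) :
    ∫ ω, g ω * (Y ω - μ[Y | m] ω) ∂μ = 0 := by
  have pull_out : μ[g * Y | m] =ᵐ[μ] g * μ[Y | m] :=
    condExp_mul_of_aestronglyMeasurable_left hg hgY hY
  have h_int : Integrable (g * μ[Y | m]) μ := integrable_condExp.congr pull_out
  calc ∫ ω, g ω * (Y ω - μ[Y | m] ω) ∂μ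
      = ∫ ω, (g * Y) ω ∂μ - ∫ ω, (g * μ[Y | m]) ω ∂μ := by
        simp only [mul_sub]; exact integral_sub hgY h_int
    _ = ∫ ω, (g * Y) ω ∂μ - ∫ ω, μ[g * Y | m] ω ∂μ := by rw [integral_congr_ae pull_out]
    _ = 0 := by rw [integral_condExp hm, sub_self]

lemma integral_add_sq_of_integral_mul_eq_zero {f g : Ω → ℝ} (hf : MemLp f 2 μ)
    (hg : MemLp g 2 μ) (h : ∫ ω, f ω * g ω ∂μ = 0) :
    ∫ ω, (f ω + g ω) ^ 2 ∂μ = ∫ ω, f ω ^ 2 ∂μ + ∫ ω, g ω ^ 2 ∂μ := by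
  have hsq : Integrable (fun ω => f ω ^ 2 + g ω ^ 2) μ := hf.integrable_sq.add hg.integrable_sq
  have hfg : Integrable (fun ω => 2 * (f ω * g ω)) μ := (hf.integrable_mul hg).const_mul 2
  simp_rw [add_sq', mul_assoc]
  rw [integral_add hsq hfg, integral_add hf.integrable_sq hg.integrable_sq, integral_const_mul, h,
    mul_zero, add_zero]

theorem variance_aipw (hm : m ≤ m₀) [IsProbabilityMeasure μ] {Y μ₀ g : Ω → ℝ}
    (hY : MemLp Y 2 μ) (hμ₀ : μ₀ =ᵐ[μ] μ[Y | m]) (hg : AEStronglyMeasurable[m] g μ)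
    (hg2 : MemLp g 2 μ) (hg_int : ∫ ω, g ω ∂μ = ∫ ω, Y ω ∂μ) (ρ : ℝ) :
    variance (fun ω => g ω - ∫ ω', Y ω' ∂μ + ρ⁻¹ * (Y ω - g ω)) μ
      = ∫ ω, ((1 - ρ⁻¹) * (g ω - ∫ ω', Y ω' ∂μ) + ρ⁻¹ * (μ₀ ω - ∫ ω', Y ω' ∂μ)) ^ 2 ∂μ
        + ρ⁻¹ ^ 2 * ∫ ω, (Y ω - μ₀ ω) ^ 2 ∂μ := by
  set ψ := ∫ ω, Y ω ∂μ
  have hY1 : Integrable Y μ := hY.integrable one_le_two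
  have hg1 : Integrable g μ := hg2.integrable one_le_two
  have hμ₀2 : MemLp μ₀ 2 μ := (hY.condExp one_le_two).ae_eq hμ₀.symm
  set V : Ω → ℝ := fun ω => (1 - ρ⁻¹) * (g ω - ψ) + ρ⁻¹ * (μ₀ ω - ψ)
  set R : Ω → ℝ := fun ω => Y ω - μ₀ ω
  have hV2 : MemLp V 2 μ :=
    ((hg2.sub (memLp_const ψ)).const_mul _).add ((hμ₀2.sub (memLp_const ψ)).const_mul _)
  have hV_meas : AEStronglyMeasurable[m] V μ := by
    have hμ₀_meas : AEStronglyMeasurable[m] μ₀ μ :=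
      stronglyMeasurable_condExp.aestronglyMeasurable.congr hμ₀.symm
    exact ((hg.sub aestronglyMeasurable_const).const_mul _).add
      ((hμ₀_meas.sub aestronglyMeasurable_const).const_mul _)
  have hVR : ∫ ω, V ω * (ρ⁻¹ * R ω) ∂μ = 0 := by
    have h := integral_mul_sub_condExp_eq_zero hm hV_meas (hV2.integrable_mul hY) hY1
    calc ∫ ω, V ω * (ρ⁻¹ * R ω) ∂μ = ρ⁻¹ * ∫ ω, V ω * (Y ω - μ[Y | m] ω) ∂μ := by
          rw [← integral_const_mul]
          refine integral_congr_ae (hμ₀.mono fun ω hω => ?_)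
          simp only [R, hω]
          ring
      _ = 0 := by rw [h, mul_zero]
  have hDL_int : ∫ ω, (g ω - ψ + ρ⁻¹ * (Y ω - g ω)) ∂μ = 0 := by
    have h_centred : Integrable (fun ω => g ω - ψ) μ := hg1.sub (integrable_const ψ)
    have h_resid : Integrable (fun ω => ρ⁻¹ * (Y ω - g ω)) μ := (hY1.sub hg1).const_mul _
    rw [integral_add h_centred h_resid, integral_sub hg1 (integrable_const ψ), integral_const_mul,
      integral_sub hY1 hg1, integral_const, hg_int]
    simp [ψ]
  have hDL2 : MemLp (fun ω => g ω - ψ + ρ⁻¹ * (Y ω - g ω)) 2 μ :=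
    (hg2.sub (memLp_const ψ)).add ((hY.sub hg2).const_mul _)
  have hDL : ∀ ω, g ω - ψ + ρ⁻¹ * (Y ω - g ω) = V ω + ρ⁻¹ * R ω := fun ω => by
    simp only [V, R]; ring
  rw [variance_of_integral_eq_zero hDL2.aemeasurable hDL_int]
  simp_rw [hDL]
  have hR2 : MemLp (fun ω => ρ⁻¹ * R ω) 2 μ := (hY.sub hμ₀2).const_mul _
  rw [integral_add_sq_of_integral_mul_eq_zero hV2 hR2 hVR]
  simp only [mul_pow, integral_const_mul, V, R]

theorem aipw_variance_identity (hm : m ≤ m₀) [IsProbabilityMeasure μ] {Y μ₀ g : Ω → ℝ}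
    (hY : MemLp Y 2 μ) (hμ₀ : μ₀ =ᵐ[μ] μ[Y | m]) (hg : AEStronglyMeasurable[m] g μ)
    (hg2 : MemLp g 2 μ) (hg_int : ∫ ω, g ω ∂μ = ∫ ω, Y ω ∂μ) {ρ : ℝ} (hρ : ρ ≠ 0) :
    ρ * variance (fun ω => g ω - ∫ ω', Y ω' ∂μ + ρ⁻¹ * (Y ω - g ω)) μ + (1 - ρ) * variance g μ
      = variance μ₀ μ + ρ⁻¹ * ∫ ω, (Y ω - μ₀ ω) ^ 2 ∂μ
        + ((1 - ρ) / ρ) * ∫ ω, (g ω - μ₀ ω) ^ 2 ∂μ := by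
  set ψ := ∫ ω, Y ω ∂μ
  have hμ₀2 : MemLp μ₀ 2 μ := (hY.condExp one_le_two).ae_eq hμ₀.symm
  have hμ₀_int : ∫ ω, μ₀ ω ∂μ = ψ := by rw [integral_congr_ae hμ₀, integral_condExp hm]
  set U : Ω → ℝ := fun ω => g ω - ψ
  set M : Ω → ℝ := fun ω => μ₀ ω - ψ
  set V : Ω → ℝ := fun ω => (1 - ρ⁻¹) * U ω + ρ⁻¹ * M ω
  have hU2 : MemLp U 2 μ := hg2.sub (memLp_const ψ)
  have hM2 : MemLp M 2 μ := hμ₀2.sub (memLp_const ψ)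
  have hV2 : MemLp V 2 μ := (hU2.const_mul _).add (hM2.const_mul _)
  have hgμ₀ : MemLp (fun ω => g ω - μ₀ ω) 2 μ := hg2.sub hμ₀2
  have h_identity : ρ * ∫ ω, V ω ^ 2 ∂μ + (1 - ρ) * ∫ ω, U ω ^ 2 ∂μ
      = ∫ ω, M ω ^ 2 ∂μ + ((1 - ρ) / ρ) * ∫ ω, (g ω - μ₀ ω) ^ 2 ∂μ := by
    calc ρ * ∫ ω, V ω ^ 2 ∂μ + (1 - ρ) * ∫ ω, U ω ^ 2 ∂μ
        = ∫ ω, (ρ * V ω ^ 2 + (1 - ρ) * U ω ^ 2) ∂μ := by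
          rw [integral_add (hV2.integrable_sq.const_mul _) (hU2.integrable_sq.const_mul _),
            integral_const_mul, integral_const_mul]
      _ = ∫ ω, (M ω ^ 2 + ((1 - ρ) / ρ) * (g ω - μ₀ ω) ^ 2) ∂μ := by
          refine integral_congr_ae (ae_of_all _ fun ω => ?_)
          simp only [V, U, M]
          field_simp
          ring
      _ = ∫ ω, M ω ^ 2 ∂μ + ((1 - ρ) / ρ) * ∫ ω, (g ω - μ₀ ω) ^ 2 ∂μ := by
          rw [integral_add hM2.integrable_sq (hgμ₀.integrable_sq.const_mul _), integral_const_mul]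
  have hρ_inv : ρ * ρ⁻¹ ^ 2 = ρ⁻¹ := by field_simp
  rw [variance_aipw hm hY hμ₀ hg hg2 hg_int, variance_eq_integral hg2.aemeasurable, hg_int,
    variance_eq_integral hμ₀2.aemeasurable, hμ₀_int]
  linear_combination h_identity + (∫ ω, (Y ω - μ₀ ω) ^ 2 ∂μ) * hρ_inv

end

/-- Asymptotic-variance formula for the AIPW class (population identity):
with `f̃ = f(X) − E[f(X)] + E[Y]`, `ψ₀ = E[Y]`, and
`D^L = f̃ − ψ₀ + ρ₀⁻¹·(Y − f̃)`, one has
`ρ₀·Var[D^L] + (1−ρ₀)·Var[f̃]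
  = Var[μ₀] + ρ₀⁻¹·E[(Y − μ₀)²] + ((1−ρ₀)/ρ₀)·E[(f̃ − μ₀)²]`,
where `μ₀` is a version of `E[Y | σ(X)]`. -/
theorem aipw_asymptotic_variance_formula
    {Ω 𝒳 : Type*} [MeasurableSpace Ω] [MeasurableSpace 𝒳]
    (P : Measure Ω) [IsProbabilityMeasure P]
    (X : Ω → 𝒳) (hX : Measurable X)
    (Y : Ω → ℝ) (hY : MemLp Y 2 P)
    (μ₀ : Ω → ℝ)
    (hμ₀ : μ₀ =ᵐ[P] P[Y | MeasurableSpace.comap X inferInstance])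
    (ρ₀ : ℝ) (hρ : ρ₀ ∈ Set.Ioo (0 : ℝ) 1)
    (f : 𝒳 → ℝ) (hf : Measurable f)
    (hfL2 : MemLp (fun ω => f (X ω)) 2 P)
    (ft : Ω → ℝ)
    (hft : ft = fun ω => f (X ω) - (∫ ω', f (X ω') ∂P) + ∫ ω', Y ω' ∂P)
    (DL : Ω → ℝ)
    (hDL : DL = fun ω => ft ω - (∫ ω', Y ω' ∂P) + ρ₀⁻¹ * (Y ω - ft ω)) :
    ρ₀ * variance DL P + (1 - ρ₀) * variance ft P
      = variance μ₀ P + ρ₀⁻¹ * (∫ ω, (Y ω - μ₀ ω) ^ 2 ∂P)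
        + ((1 - ρ₀) / ρ₀) * (∫ ω, (ft ω - μ₀ ω) ^ 2 ∂P) := by
  subst hft hDL
  have hXm : Measurable[MeasurableSpace.comap X inferInstance] X := comap_measurable X
  have hfX : Integrable (fun ω => f (X ω)) P := hfL2.integrable one_le_two
  have hft_meas : AEStronglyMeasurable[MeasurableSpace.comap X inferInstance]
      (fun ω => f (X ω) - ∫ ω', f (X ω') ∂P + ∫ ω', Y ω' ∂P) P :=
    ((hf.comp hXm).sub_const _ |>.add_const _).stronglyMeasurable.aestronglyMeasurable
  have hft_int : ∫ ω, (f (X ω) - ∫ ω', f (X ω') ∂P + ∫ ω', Y ω' ∂P) ∂P = ∫ ω, Y ω ∂P := by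
    rw [integral_add (f := fun ω => f (X ω) - _) (hfX.sub (integrable_const _))
      (integrable_const _), integral_sub hfX (integrable_const _)]
    simp
  exact aipw_variance_identity hX.comap_le hY hμ₀ hft_meas
    ((hfL2.sub (memLp_const _)).add (memLp_const _)) hft_int hρ.1.ne'
end

section
/- The AIPW asymptotic variance is minimized at the conditional mean: Under the setting of the asymptotic-variance formula — X : Ω → 𝒳, Y square-integrable, μ₀ a version of E[Y | σ(X)], ρ₀ ∈ (0,1), f : 𝒳 → ℝ measurable with f(X) square-integrable, f̃ := f(X) − E[f(X)] + E[Y], ψ₀ := E[Y], D^L := f̃ − ψ₀ + ρ₀⁻¹·(Y − f̃) — one has ρ₀·Var[D^L] + (1−ρ₀)·Var[f̃] ≥ Var[μ₀] + ρ₀⁻¹·E[(Y − μ₀)²], with equality if and only if f̃ = μ₀ almost surely. -/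
open MeasureTheory ProbabilityTheory

/-! With the residual `R = Y - f̃`, the AIPW influence function `D^L` is `f̃ + ρ₀⁻¹ R` up to a
constant, so `ρ₀ Var[D^L] + (1 - ρ₀) Var[f̃] = Var[Y] + (ρ₀⁻¹ - 1) Var[R]`. Since `Y - μ₀` is
orthogonal to every square-integrable σ(X)-measurable variable, Pythagoras gives
`Var[Y] = Var[μ₀] + Var[Y - μ₀]` and `Var[R] = Var[Y - μ₀] + Var[μ₀ - f̃]`. Hence the left-hand
side exceeds the bound by `(ρ₀⁻¹ - 1) Var[μ₀ - f̃]`, which vanishes iff `f̃ = μ₀` a.s., because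
`f̃` and `μ₀` both have mean `E[Y]`. -/

section

variable {Ω : Type*} {m mΩ : MeasurableSpace Ω} {P : Measure Ω}

lemma variance_add_inv_smul_mixture [IsFiniteMeasure P] {U R : Ω → ℝ} (hU : MemLp U 2 P)
    (hR : MemLp R 2 P) {ρ : ℝ} (hρ : ρ ≠ 0) :
    ρ * Var[U + ρ⁻¹ • R; P] + (1 - ρ) * Var[U; P] = Var[U + R; P] + (ρ⁻¹ - 1) * Var[R; P] := by
  rw [variance_add hU (hR.const_smul _), variance_add hU hR, variance_smul,
    covariance_smul_right]
  field_simp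
  ring

lemma variance_aipw_mixture [IsProbabilityMeasure P] {U Y : Ω → ℝ} (hU : MemLp U 2 P)
    (hY : MemLp Y 2 P) {ρ : ℝ} (hρ : ρ ≠ 0) (c : ℝ) :
    ρ * Var[fun ω => U ω - c + ρ⁻¹ * (Y ω - U ω); P] + (1 - ρ) * Var[U; P]
      = Var[Y; P] + (ρ⁻¹ - 1) * Var[Y - U; P] := by
  have hshift : (fun ω => U ω - c + ρ⁻¹ * (Y ω - U ω)) = fun ω => (U + ρ⁻¹ • (Y - U)) ω - c := by
    ext ω
    simp only [Pi.add_apply, Pi.smul_apply, Pi.sub_apply, smul_eq_mul]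
    ring
  rw [hshift, variance_sub_const (hU.add ((hY.sub hU).const_smul _)).1,
    variance_add_inv_smul_mixture hU (hY.sub hU) hρ, add_sub_cancel]

lemma integral_sub_eq_zero_of_integral_eq [IsFiniteMeasure P] {U V : Ω → ℝ}
    (hU : MemLp U 2 P) (hV : MemLp V 2 P) (hUV : P[U] = P[V]) : P[U - V] = 0 := by
  rw [integral_sub' (hU.integrable one_le_two) (hV.integrable one_le_two), hUV, sub_self]

lemma variance_sub_of_integral_eq [IsFiniteMeasure P] {U V : Ω → ℝ} (hU : MemLp U 2 P)
    (hV : MemLp V 2 P) (hUV : P[U] = P[V]) : Var[U - V; P] = ∫ ω, (U ω - V ω) ^ 2 ∂P :=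
  variance_of_integral_eq_zero (hU.sub hV).aemeasurable
    (integral_sub_eq_zero_of_integral_eq hU hV hUV)

lemma ae_eq_iff_variance_sub_eq_zero [IsFiniteMeasure P] {U V : Ω → ℝ} (hU : MemLp U 2 P)
    (hV : MemLp V 2 P) (hUV : P[U] = P[V]) : U =ᵐ[P] V ↔ Var[U - V; P] = 0 := by
  constructor
  · intro h
    rw [variance_congr (h.sub (Filter.EventuallyEq.refl _ V)), sub_self, variance_zero]
  · intro h
    filter_upwards [ae_eq_integral_of_variance_eq_zero (hU.sub hV) h] with ω hω
    rwa [integral_sub_eq_zero_of_integral_eq hU hV hUV, Pi.sub_apply, sub_eq_zero] at hω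

variable [IsProbabilityMeasure P]

lemma integral_eq_of_ae_eq_condExp (hm : m ≤ mΩ) {Y μ₀ : Ω → ℝ} (hμ₀ : μ₀ =ᵐ[P] P[Y|m]) :
    P[μ₀] = P[Y] :=
  (integral_congr_ae hμ₀).trans (integral_condExp hm)

lemma covariance_sub_eq_zero_of_ae_eq_condExp (hm : m ≤ mΩ) {Y μ₀ Z : Ω → ℝ}
    (hY : MemLp Y 2 P) (hμ₀ : μ₀ =ᵐ[P] P[Y|m]) (hZm : AEStronglyMeasurable[m] Z P)
    (hZ : MemLp Z 2 P) : cov[Z, Y - μ₀; P] = 0 := by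
  have hμ₀L2 : MemLp μ₀ 2 P := (hY.condExp one_le_two).ae_eq hμ₀.symm
  have hpull : ∫ ω, Z ω * μ₀ ω ∂P = ∫ ω, Z ω * Y ω ∂P := calc
    ∫ ω, Z ω * μ₀ ω ∂P = ∫ ω, (Z * P[Y|m]) ω ∂P :=
        integral_congr_ae (Filter.EventuallyEq.rfl.mul hμ₀)
    _ = ∫ ω, (P[Z * Y|m]) ω ∂P := integral_congr_ae <|
        (condExp_mul_of_aestronglyMeasurable_left hZm (hZ.integrable_mul hY)
          (hY.integrable one_le_two)).symm
    _ = ∫ ω, Z ω * Y ω ∂P := integral_condExp hm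
  rw [covariance_sub_right hZ hY hμ₀L2, covariance_eq_sub hZ hY, covariance_eq_sub hZ hμ₀L2]
  simp only [Pi.mul_apply, hpull, integral_eq_of_ae_eq_condExp hm hμ₀, sub_self]

lemma variance_sub_eq_add_of_ae_eq_condExp (hm : m ≤ mΩ) {Y μ₀ Z : Ω → ℝ}
    (hY : MemLp Y 2 P) (hμ₀ : μ₀ =ᵐ[P] P[Y|m]) (hZm : AEStronglyMeasurable[m] Z P)
    (hZ : MemLp Z 2 P) : Var[Y - Z; P] = Var[Y - μ₀; P] + Var[μ₀ - Z; P] := by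
  have hμ₀L2 : MemLp μ₀ 2 P := (hY.condExp one_le_two).ae_eq hμ₀.symm
  have hμ₀m : AEStronglyMeasurable[m] μ₀ P :=
    stronglyMeasurable_condExp.aestronglyMeasurable.congr hμ₀.symm
  rw [← sub_add_sub_cancel Y μ₀ Z, variance_add (hY.sub hμ₀L2) (hμ₀L2.sub hZ), covariance_comm,
    covariance_sub_eq_zero_of_ae_eq_condExp hm hY hμ₀ (hμ₀m.sub hZm) (hμ₀L2.sub hZ)]
  ring

end

/-- The AIPW asymptotic variance is minimized at the conditional mean:
with `f̃ = f(X) − E[f(X)] + E[Y]`, `ψ₀ = E[Y]`, and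
`D^L = f̃ − ψ₀ + ρ₀⁻¹·(Y − f̃)`, one has
`ρ₀·Var[D^L] + (1−ρ₀)·Var[f̃] ≥ Var[μ₀] + ρ₀⁻¹·E[(Y − μ₀)²]`,
with equality if and only if `f̃ = μ₀` almost surely. -/
theorem aipw_asymptotic_variance_minimized_at_conditional_mean
    {Ω 𝒳 : Type*} [MeasurableSpace Ω] [MeasurableSpace 𝒳]
    (P : Measure Ω) [IsProbabilityMeasure P]
    (X : Ω → 𝒳) (hX : Measurable X)
    (Y : Ω → ℝ) (hY : MemLp Y 2 P)
    (μ₀ : Ω → ℝ)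
    (hμ₀ : μ₀ =ᵐ[P] P[Y | MeasurableSpace.comap X inferInstance])
    (ρ₀ : ℝ) (hρ : ρ₀ ∈ Set.Ioo (0 : ℝ) 1)
    (f : 𝒳 → ℝ) (hf : Measurable f)
    (hfL2 : MemLp (fun ω => f (X ω)) 2 P)
    (ft : Ω → ℝ)
    (hft : ft = fun ω => f (X ω) - (∫ ω', f (X ω') ∂P) + ∫ ω', Y ω' ∂P)
    (DL : Ω → ℝ)
    (hDL : DL = fun ω => ft ω - (∫ ω', Y ω' ∂P) + ρ₀⁻¹ * (Y ω - ft ω)) :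
    (variance μ₀ P + ρ₀⁻¹ * (∫ ω, (Y ω - μ₀ ω) ^ 2 ∂P)
      ≤ ρ₀ * variance DL P + (1 - ρ₀) * variance ft P)
    ∧ (ρ₀ * variance DL P + (1 - ρ₀) * variance ft P
        = variance μ₀ P + ρ₀⁻¹ * (∫ ω, (Y ω - μ₀ ω) ^ 2 ∂P)
      ↔ ft =ᵐ[P] μ₀) := by
  have hm := hX.comap_le
  have hμ₀L2 : MemLp μ₀ 2 P := (hY.condExp one_le_two).ae_eq hμ₀.symm
  have hftL2 : MemLp ft 2 P := hft ▸ (hfL2.sub (memLp_const _)).add (memLp_const _)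
  have hftm : AEStronglyMeasurable[MeasurableSpace.comap X inferInstance] ft P := by
    rw [hft]
    exact ((hf.comp (comap_measurable X)).sub_const _).add_const _ |>.aestronglyMeasurable
  have hft_mean : P[μ₀] = P[ft] := by
    have hfint := hfL2.integrable one_le_two
    have hcentered : Integrable (fun ω => f (X ω) - ∫ ω', f (X ω') ∂P) P :=
      hfint.sub (integrable_const _)
    simp only [integral_eq_of_ae_eq_condExp hm hμ₀, hft]
    rw [integral_add hcentered (integrable_const _), integral_sub hfint (integrable_const _)]
    simp
  have hVarY : Var[Y; P] = Var[Y - μ₀; P] + Var[μ₀; P] := by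
    simpa using variance_sub_eq_add_of_ae_eq_condExp hm hY hμ₀ (Z := 0)
      aestronglyMeasurable_zero MemLp.zero
  have key : ρ₀ * Var[DL; P] + (1 - ρ₀) * Var[ft; P]
      = Var[μ₀; P] + ρ₀⁻¹ * Var[Y - μ₀; P] + (ρ₀⁻¹ - 1) * Var[μ₀ - ft; P] := by
    rw [hDL, variance_aipw_mixture hftL2 hY hρ.1.ne',
      variance_sub_eq_add_of_ae_eq_condExp hm hY hμ₀ hftm hftL2, hVarY]
    ring
  have hcoef : 0 < ρ₀⁻¹ - 1 := sub_pos.2 (one_lt_inv₀ hρ.1 |>.2 hρ.2)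
  rw [← variance_sub_of_integral_eq hY hμ₀L2 (integral_eq_of_ae_eq_condExp hm hμ₀).symm, key,
    ae_eq_comm, ae_eq_iff_variance_sub_eq_zero hμ₀L2 hftL2 hft_mean]
  exact ⟨le_add_of_nonneg_right (mul_nonneg hcoef.le (variance_nonneg _ _)), by simp [hcoef.ne']⟩
end

section
/- Unbiasedness of the AIPW estimating function under missing at random: Let (Ω, 𝓐, P) be a probability space, X : Ω → 𝒳 and Y : Ω → 𝒴 random variables into measurable spaces, R : Ω → {0,1} a random variable, and π₀ : 𝒳 → ℝ a measurable function with π₀(X) > 0 almost surely and E[R | σ(X,Y)] = π₀(X) almost surely. Let φ : 𝒴 → ℝ and m : 𝒳 → ℝ be measurable with φ(Y), m(X), and (R/π₀(X))·(φ(Y) − m(X)) integrable. Then E[ m(X) + (R/π₀(X))·(φ(Y) − m(X)) ] = E[φ(Y)]. -/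
open MeasureTheory

/-- Unbiasedness of the AIPW estimating function under missing at random:
if `R` takes values in `{0,1}`, `π₀(X) > 0` almost surely, and
`E[R | σ(X,Y)] = π₀(X)` almost surely, then for measurable `φ`, `m` with the
indicated integrability, `E[m(X) + (R/π₀(X))·(φ(Y) − m(X))] = E[φ(Y)]`. -/
theorem aipw_estimating_function_unbiased_mar
    {Ω 𝒳 𝒴 : Type*} [MeasurableSpace Ω] [MeasurableSpace 𝒳] [MeasurableSpace 𝒴]
    (P : Measure Ω) [IsProbabilityMeasure P]
    (X : Ω → 𝒳) (Y : Ω → 𝒴) (R : Ω → ℝ)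
    (hX : Measurable X) (hY : Measurable Y) (hR : Measurable R)
    (hR01 : ∀ ω, R ω = 0 ∨ R ω = 1)
    (π₀ : 𝒳 → ℝ) (hπ : Measurable π₀)
    (hπpos : ∀ᵐ ω ∂P, 0 < π₀ (X ω))
    (hMAR : P[R | MeasurableSpace.comap (fun ω => (X ω, Y ω)) inferInstance]
      =ᵐ[P] fun ω => π₀ (X ω))
    (φ : 𝒴 → ℝ) (m : 𝒳 → ℝ) (hφ : Measurable φ) (hm : Measurable m)
    (hφint : Integrable (fun ω => φ (Y ω)) P)
    (hmint : Integrable (fun ω => m (X ω)) P)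
    (haug : Integrable (fun ω => R ω / π₀ (X ω) * (φ (Y ω) - m (X ω))) P) :
    ∫ ω, (m (X ω) + R ω / π₀ (X ω) * (φ (Y ω) - m (X ω))) ∂P
      = ∫ ω, φ (Y ω) ∂P := by
  set mXY := MeasurableSpace.comap (fun ω => (X ω, Y ω)) inferInstance with hmXY
  have hm_le : mXY ≤ _ := (hX.prodMk hY).comap_le
  set g : Ω → ℝ := fun ω => (φ (Y ω) - m (X ω)) / π₀ (X ω) with hg
  have hpair : Measurable[mXY] (fun ω => (X ω, Y ω)) :=
    Measurable.of_comap_le le_rfl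
  have hgmeas : StronglyMeasurable[mXY] g := by
    have : Measurable[mXY] g := by
      exact (((hφ.comp measurable_snd).comp hpair).sub
        ((hm.comp measurable_fst).comp hpair)).div
        ((hπ.comp measurable_fst).comp hpair)
    exact this.stronglyMeasurable
  have hRint : Integrable R P := by
    refine (integrable_const (1 : ℝ)).mono' hR.aestronglyMeasurable ?_
    filter_upwards with ω
    rcases hR01 ω with h | h <;> simp [h]
  have hgR : (fun ω => g ω * R ω) = fun ω => R ω / π₀ (X ω) * (φ (Y ω) - m (X ω)) := by
    funext ω; simp only [hg]; ring
  have hgRint : Integrable (g * R) P := by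
    have : (g * R) = fun ω => R ω / π₀ (X ω) * (φ (Y ω) - m (X ω)) := hgR
    rw [this]; exact haug
  haveI : SigmaFinite (P.trim hm_le) := by
    infer_instance
  have hkey : ∫ ω, g ω * R ω ∂P = ∫ ω, (φ (Y ω) - m (X ω)) ∂P := by
    have h1 : ∫ ω, (g * R) ω ∂P = ∫ ω, (P[g * R | mXY]) ω ∂P :=
      (integral_condExp hm_le).symm
    have h2 : P[g * R | mXY] =ᵐ[P] g * P[R | mXY] :=
      condExp_mul_of_stronglyMeasurable_left hgmeas hgRint hRint
    have h3 : (fun ω => g ω * (P[R | mXY]) ω) =ᵐ[P] fun ω => φ (Y ω) - m (X ω) := by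
      filter_upwards [hMAR, hπpos] with ω hω hπω
      simp only [hg]
      rw [hω]
      field_simp
    calc ∫ ω, g ω * R ω ∂P = ∫ ω, (P[g * R | mXY]) ω ∂P := h1
      _ = ∫ ω, g ω * (P[R | mXY]) ω ∂P := integral_congr_ae h2
      _ = ∫ ω, (φ (Y ω) - m (X ω)) ∂P := integral_congr_ae h3
  have haug' : ∫ ω, R ω / π₀ (X ω) * (φ (Y ω) - m (X ω)) ∂P
      = ∫ ω, (φ (Y ω) - m (X ω)) ∂P := by
    rw [← hkey]; exact integral_congr_ae (by filter_upwards with ω using (congrFun hgR ω).symm)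
  rw [integral_add hmint haug, haug', integral_sub hφint hmint]
  ring
end

section
/- Variance decomposition for AIPW estimating functions under missing at random: Let (Ω, 𝓐, P) be a probability space, X : Ω → 𝒳 and Y : Ω → 𝒴 random variables into measurable spaces, R : Ω → {0,1}, and π₀ : 𝒳 → ℝ measurable with π₀(X) > 0 almost surely and E[R | σ(X,Y)] = π₀(X) almost surely. Let φ : 𝒴 → ℝ and m : 𝒳 → ℝ be measurable, let m₀ be a measurable function with m₀(X) a version of E[φ(Y) | σ(X)], and set δ(X) := m(X) − m₀(X). Assume that m(X) + (R/π₀(X))·(φ(Y) − m(X)), m₀(X) + (R/π₀(X))·(φ(Y) − m₀(X)), and ((1−π₀(X))/π₀(X))^{1/2}·δ(X) are all square-integrable. Then Var[ m(X) + (R/π₀(X))·(φ(Y) − m(X)) ] = Var[ m₀(X) + (R/π₀(X))·(φ(Y) − m₀(X)) ] + E[ ((1 − π₀(X))/π₀(X))·δ(X)² ]. -/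
/-!
Conditionally on `σ(X, Y)`, the AIPW function `V_a = a + (R / π)(φ - a)` takes the value
`a + (φ - a) / π` with probability `π` and the value `a` otherwise. Hence its conditional mean
is `φ(Y)` and its conditional variance is `((1 - π) / π) (φ - a)²`, which gives
`Var V_a = Var φ(Y) + E[((1 - π) / π) (φ - a)²]`. The second moment is computed with
nonnegative (Lebesgue) integrals, so square integrability of `V_a` alone already makes
`φ(Y)` and `((1 - π) / π) (φ - a)²` integrable. Finally `φ(Y) - m₀(X)` is orthogonal to every
`σ(X)`-measurable function, so the weighted squared distances of `φ(Y)` to `m(X)` and to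
`m₀(X)` differ by `E[((1 - π) / π) δ²]`.
-/

open MeasureTheory ProbabilityTheory

section CondExp

variable {Ω : Type*} {m : MeasurableSpace Ω} [mΩ : MeasurableSpace Ω] {μ : Measure Ω}

theorem integral_mul_eq_zero_of_condExp_eq_zero (hm : m ≤ mΩ) [SigmaFinite (μ.trim hm)]
    {g ρ : Ω → ℝ} (hg : StronglyMeasurable[m] g) (hρ : Integrable ρ μ)
    (hgρ : Integrable (fun ω => g ω * ρ ω) μ) (hce : μ[ρ|m] =ᵐ[μ] 0) :
    ∫ ω, g ω * ρ ω ∂μ = 0 := by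
  have hpull : μ[g * ρ|m] =ᵐ[μ] 0 := by
    filter_upwards [condExp_mul_of_stronglyMeasurable_left hg hgρ hρ, hce] with ω h h0
    simp [h, h0]
  calc ∫ ω, g ω * ρ ω ∂μ = ∫ ω, μ[g * ρ|m] ω ∂μ := (integral_condExp hm).symm
    _ = 0 := by simp [integral_congr_ae hpull]

theorem lintegral_ofReal_mul_condExp (hm : m ≤ mΩ) [SigmaFinite (μ.trim hm)]
    {ρ : Ω → ℝ} (hρ : Integrable ρ μ) (hρ0 : 0 ≤ᵐ[μ] ρ)
    {f : Ω → ENNReal} (hf : Measurable[m] f) :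
    ∫⁻ ω, ENNReal.ofReal (ρ ω) * f ω ∂μ = ∫⁻ ω, ENNReal.ofReal (μ[ρ|m] ω) * f ω ∂μ := by
  have htrim : (μ.withDensity fun ω => ENNReal.ofReal (ρ ω)).trim hm
      = (μ.withDensity fun ω => ENNReal.ofReal (μ[ρ|m] ω)).trim hm := by
    refine @Measure.ext Ω m _ _ fun s hs => ?_
    rw [trim_measurableSet_eq hm hs, trim_measurableSet_eq hm hs,
      withDensity_apply _ (hm s hs), withDensity_apply _ (hm s hs),
      ← ofReal_integral_eq_lintegral_ofReal hρ.restrict (ae_restrict_of_ae hρ0),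
      ← ofReal_integral_eq_lintegral_ofReal integrable_condExp.restrict
        (ae_restrict_of_ae (condExp_nonneg hρ0)),
      setIntegral_condExp hm hρ hs]
  calc ∫⁻ ω, ENNReal.ofReal (ρ ω) * f ω ∂μ
      = ∫⁻ ω, f ω ∂(μ.withDensity fun ω => ENNReal.ofReal (ρ ω)).trim hm := by
        rw [lintegral_trim hm hf]
        exact (lintegral_withDensity_eq_lintegral_mul₀ hρ.aemeasurable.ennreal_ofReal
          (hf.mono hm le_rfl).aemeasurable).symm
    _ = ∫⁻ ω, ENNReal.ofReal (μ[ρ|m] ω) * f ω ∂μ := by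
        rw [htrim, lintegral_trim hm hf]
        exact lintegral_withDensity_eq_lintegral_mul₀
          integrable_condExp.aemeasurable.ennreal_ofReal (hf.mono hm le_rfl).aemeasurable

theorem integral_mul_sq_sub_eq_add_of_condExp_eq (hm : m ≤ mΩ) [SigmaFinite (μ.trim hm)]
    {c a b u : Ω → ℝ} (hc : Measurable[m] c) (hc0 : 0 ≤ᵐ[μ] c) (ha : Measurable[m] a)
    (hb : Measurable[m] b) (hu : Integrable u μ) (hub : μ[u|m] =ᵐ[μ] b)
    (hca : Integrable (fun ω => c ω * (u ω - a ω) ^ 2) μ)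
    (hcb : Integrable (fun ω => c ω * (u ω - b ω) ^ 2) μ) :
    ∫ ω, c ω * (u ω - a ω) ^ 2 ∂μ
      = ∫ ω, c ω * (u ω - b ω) ^ 2 ∂μ + ∫ ω, c ω * (a ω - b ω) ^ 2 ∂μ := by
  have hb_int : Integrable b μ := integrable_condExp.congr hub
  have hce : μ[u - b|m] =ᵐ[μ] 0 := by
    filter_upwards [condExp_sub hu hb_int m, hub] with ω h hω
    rw [h, Pi.sub_apply, condExp_of_stronglyMeasurable hm (hb.stronglyMeasurable) hb_int, hω]
    simp
  have hcab : Integrable (fun ω => c ω * (a ω - b ω) ^ 2) μ := by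
    refine Integrable.mono' ((hca.add hcb).const_mul 2)
      ((hc.mul ((ha.sub hb).pow_const 2)).mono hm le_rfl).aestronglyMeasurable ?_
    filter_upwards [hc0] with ω (hω : 0 ≤ c ω)
    rw [Real.norm_eq_abs, abs_of_nonneg (mul_nonneg hω (sq_nonneg _))]
    simp only [Pi.add_apply]
    nlinarith [mul_nonneg hω (sq_nonneg (2 * u ω - a ω - b ω))]
  have hcross_int : Integrable (fun ω => (c ω * (a ω - b ω)) * (u ω - b ω)) μ :=
    (((hcb.add hcab).sub hca).div_const 2).congr (ae_of_all _ fun ω => by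
      simp only [Pi.add_apply, Pi.sub_apply]
      ring)
  have hcross : ∫ ω, (c ω * (a ω - b ω)) * (u ω - b ω) ∂μ = 0 :=
    integral_mul_eq_zero_of_condExp_eq_zero hm (hc.mul (ha.sub hb)).stronglyMeasurable
      (hu.sub hb_int) hcross_int hce
  calc ∫ ω, c ω * (u ω - a ω) ^ 2 ∂μ
      = ∫ ω, (c ω * (u ω - b ω) ^ 2 + c ω * (a ω - b ω) ^ 2
          - 2 * ((c ω * (a ω - b ω)) * (u ω - b ω))) ∂μ := by
        congr 1 with ω
        ring
    _ = _ := by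
        rw [integral_sub (hcb.fun_add hcab) (hcross_int.const_mul 2), integral_add hcb hcab,
          integral_const_mul, hcross, mul_zero, sub_zero]

end CondExp

noncomputable def aipw {Ω : Type*} (R p a u : Ω → ℝ) : Ω → ℝ :=
  fun ω => a ω + R ω / p ω * (u ω - a ω)

section MissingAtRandom

variable {Ω : Type*} {𝓜 : MeasurableSpace Ω} [mΩ : MeasurableSpace Ω] {P : Measure Ω}
  [IsProbabilityMeasure P] {R p a u : Ω → ℝ}

theorem ae_mem_Icc_of_condExp_eq (h𝓜 : 𝓜 ≤ mΩ) (hR : Integrable R P)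
    (hR_mem : ∀ᵐ ω ∂P, R ω ∈ Set.Icc 0 1) (hRp : P[R|𝓜] =ᵐ[P] p) :
    ∀ᵐ ω ∂P, p ω ∈ Set.Icc 0 1 := by
  filter_upwards [hRp, condExp_nonneg (m := 𝓜) (hR_mem.mono fun _ h => h.1),
    condExp_mono (m := 𝓜) hR (integrable_const 1) (hR_mem.mono fun _ h => h.2)]
    with ω hω h0 h1
  rw [condExp_const h𝓜, hω] at h1
  exact ⟨hω ▸ h0, h1⟩

theorem lintegral_ofReal_aipw_sq (h𝓜 : 𝓜 ≤ mΩ) (hR : Integrable R P)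
    (hR01 : ∀ ω, R ω = 0 ∨ R ω = 1) (hRp : P[R|𝓜] =ᵐ[P] p) (hp_pos : ∀ᵐ ω ∂P, 0 < p ω)
    (hp : Measurable[𝓜] p) (ha : Measurable[𝓜] a) (hu : Measurable[𝓜] u) :
    ∫⁻ ω, ENNReal.ofReal (aipw R p a u ω ^ 2) ∂P
      = ∫⁻ ω, ENNReal.ofReal (u ω ^ 2) ∂P
        + ∫⁻ ω, ENNReal.ofReal ((1 - p ω) / p ω * (u ω - a ω) ^ 2) ∂P := by
  set U : Ω → ℝ := fun ω => a ω + (u ω - a ω) / p ω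
  have hU : Measurable[𝓜] U := ha.add ((hu.sub ha).div hp)
  have hR_mem : ∀ ω, R ω ∈ Set.Icc 0 1 := fun ω => by rcases hR01 ω with h | h <;> simp [h]
  have hp_mem := ae_mem_Icc_of_condExp_eq h𝓜 hR (ae_of_all _ hR_mem) hRp
  have h1R : P[fun ω => 1 - R ω|𝓜] =ᵐ[P] fun ω => 1 - p ω := by
    have h := condExp_sub (integrable_const (1 : ℝ)) hR 𝓜
    rw [condExp_const h𝓜] at h
    filter_upwards [h, hRp] with ω h hω
    rw [← hω]
    exact h
  have hsplit : ∀ ω, ENNReal.ofReal (aipw R p a u ω ^ 2)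
      = ENNReal.ofReal (R ω) * ENNReal.ofReal (U ω ^ 2)
        + ENNReal.ofReal (1 - R ω) * ENNReal.ofReal (a ω ^ 2) := by
    intro ω
    rcases hR01 ω with h | h <;> simp [aipw, U, h, div_eq_inv_mul]
  have hU2 : Measurable[𝓜] fun ω => ENNReal.ofReal (U ω ^ 2) := (hU.pow_const 2).ennreal_ofReal
  have ha2 : Measurable[𝓜] fun ω => ENNReal.ofReal (a ω ^ 2) := (ha.pow_const 2).ennreal_ofReal
  calc ∫⁻ ω, ENNReal.ofReal (aipw R p a u ω ^ 2) ∂P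
      = ∫⁻ ω, ENNReal.ofReal (R ω) * ENNReal.ofReal (U ω ^ 2) ∂P
        + ∫⁻ ω, ENNReal.ofReal (1 - R ω) * ENNReal.ofReal (a ω ^ 2) ∂P := by
        simp_rw [hsplit]
        exact lintegral_add_left'
          (hR.aemeasurable.ennreal_ofReal.mul (hU2.mono h𝓜 le_rfl).aemeasurable) _
    _ = ∫⁻ ω, ENNReal.ofReal (p ω) * ENNReal.ofReal (U ω ^ 2) ∂P
        + ∫⁻ ω, ENNReal.ofReal (1 - p ω) * ENNReal.ofReal (a ω ^ 2) ∂P := by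
        have h1R_int : Integrable (fun ω => 1 - R ω) P := (integrable_const 1).sub hR
        rw [lintegral_ofReal_mul_condExp h𝓜 hR (ae_of_all _ fun ω => (hR_mem ω).1) hU2,
          lintegral_ofReal_mul_condExp h𝓜 h1R_int
            (ae_of_all _ fun ω => sub_nonneg.2 (hR_mem ω).2) ha2]
        congr 1 <;> refine lintegral_congr_ae ?_
        · filter_upwards [hRp] with ω hω
          rw [hω]
        · filter_upwards [h1R] with ω hω
          rw [hω]
    _ = ∫⁻ ω, (ENNReal.ofReal (u ω ^ 2)
          + ENNReal.ofReal ((1 - p ω) / p ω * (u ω - a ω) ^ 2)) ∂P := by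
        have hpU2 : AEMeasurable (fun ω => ENNReal.ofReal (p ω) * ENNReal.ofReal (U ω ^ 2)) P :=
          ((hp.mono h𝓜 le_rfl).ennreal_ofReal.mul (hU2.mono h𝓜 le_rfl)).aemeasurable
        rw [← lintegral_add_left' hpU2]
        refine lintegral_congr_ae ?_
        filter_upwards [hp_pos, hp_mem] with ω hp0 hp1
        have hq : 0 ≤ 1 - p ω := sub_nonneg.2 hp1.2
        rw [← ENNReal.ofReal_mul hp0.le, ← ENNReal.ofReal_mul hq,
          ← ENNReal.ofReal_add (by positivity) (by positivity),
          ← ENNReal.ofReal_add (by positivity) (by positivity)]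
        congr 1
        simp only [U]
        field_simp
        ring
    _ = _ := lintegral_add_left' ((hu.mono h𝓜 le_rfl).pow_const 2).ennreal_ofReal.aemeasurable _

theorem integral_aipw_sq (h𝓜 : 𝓜 ≤ mΩ) (hR : Integrable R P)
    (hR01 : ∀ ω, R ω = 0 ∨ R ω = 1) (hRp : P[R|𝓜] =ᵐ[P] p) (hp_pos : ∀ᵐ ω ∂P, 0 < p ω)
    (hp : Measurable[𝓜] p) (ha : Measurable[𝓜] a) (hu : Measurable[𝓜] u)
    (hV : MemLp (aipw R p a u) 2 P) :
    MemLp u 2 P ∧ Integrable (fun ω => (1 - p ω) / p ω * (u ω - a ω) ^ 2) P ∧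
      ∫ ω, aipw R p a u ω ^ 2 ∂P
        = ∫ ω, u ω ^ 2 ∂P + ∫ ω, (1 - p ω) / p ω * (u ω - a ω) ^ 2 ∂P := by
  have hp_mem := ae_mem_Icc_of_condExp_eq h𝓜 hR
    (ae_of_all _ fun ω => by rcases hR01 ω with h | h <;> simp [h]) hRp
  have hu2_nonneg : 0 ≤ᵐ[P] fun ω => u ω ^ 2 := ae_of_all _ fun ω => sq_nonneg _
  have hc_nonneg : 0 ≤ᵐ[P] fun ω => (1 - p ω) / p ω * (u ω - a ω) ^ 2 := by
    filter_upwards [hp_pos, hp_mem] with ω hp0 hp1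
    have := sub_nonneg.2 hp1.2
    positivity
  have hfin := (hasFiniteIntegral_iff_ofReal (ae_of_all _ fun ω => sq_nonneg _)).1
    hV.integrable_sq.2
  rw [lintegral_ofReal_aipw_sq h𝓜 hR hR01 hRp hp_pos hp ha hu] at hfin
  obtain ⟨hu2_fin, hc_fin⟩ := ENNReal.add_lt_top.1 hfin
  have hu2 : Integrable (fun ω => u ω ^ 2) P :=
    ⟨((hu.mono h𝓜 le_rfl).pow_const 2).aestronglyMeasurable,
      (hasFiniteIntegral_iff_ofReal hu2_nonneg).2 hu2_fin⟩
  have hc : Integrable (fun ω => (1 - p ω) / p ω * (u ω - a ω) ^ 2) P :=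
    ⟨((((hp.const_sub 1).div hp).mul ((hu.sub ha).pow_const 2)).mono h𝓜
      le_rfl).aestronglyMeasurable, (hasFiniteIntegral_iff_ofReal hc_nonneg).2 hc_fin⟩
  refine ⟨(memLp_two_iff_integrable_sq (hu.mono h𝓜 le_rfl).aestronglyMeasurable).2 hu2, hc, ?_⟩
  rw [integral_eq_lintegral_of_nonneg_ae (ae_of_all _ fun ω => sq_nonneg _)
      hV.integrable_sq.aestronglyMeasurable,
    integral_eq_lintegral_of_nonneg_ae hu2_nonneg hu2.aestronglyMeasurable,
    integral_eq_lintegral_of_nonneg_ae hc_nonneg hc.aestronglyMeasurable,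
    lintegral_ofReal_aipw_sq h𝓜 hR hR01 hRp hp_pos hp ha hu,
    ENNReal.toReal_add hu2_fin.ne hc_fin.ne]

theorem integral_aipw (h𝓜 : 𝓜 ≤ mΩ) (hR : Integrable R P) (hRp : P[R|𝓜] =ᵐ[P] p)
    (hp_pos : ∀ᵐ ω ∂P, 0 < p ω) (hp : Measurable[𝓜] p) (ha : Measurable[𝓜] a)
    (hu : Measurable[𝓜] u) (hV : Integrable (aipw R p a u) P) (hu_int : Integrable u P) :
    ∫ ω, aipw R p a u ω ∂P = ∫ ω, u ω ∂P := by
  have hp_int : Integrable p P := integrable_condExp.congr hRp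
  have hce : P[R - p|𝓜] =ᵐ[P] 0 := by
    filter_upwards [condExp_sub hR hp_int 𝓜, hRp] with ω h hω
    rw [h, Pi.sub_apply, condExp_of_stronglyMeasurable h𝓜 hp.stronglyMeasurable hp_int, hω]
    simp
  have hdiff : (fun ω => (u ω - a ω) / p ω * (R - p) ω)
      =ᵐ[P] fun ω => aipw R p a u ω - u ω := by
    filter_upwards [hp_pos] with ω hp0
    simp only [aipw, Pi.sub_apply]
    field_simp
    ring
  rw [← sub_eq_zero, ← integral_sub hV hu_int, ← integral_congr_ae hdiff]
  exact integral_mul_eq_zero_of_condExp_eq_zero h𝓜 ((hu.sub ha).div hp).stronglyMeasurable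
    (hR.sub hp_int) ((hV.sub hu_int).congr hdiff.symm) hce

theorem variance_aipw_s16 (h𝓜 : 𝓜 ≤ mΩ) (hR : Integrable R P)
    (hR01 : ∀ ω, R ω = 0 ∨ R ω = 1) (hRp : P[R|𝓜] =ᵐ[P] p) (hp_pos : ∀ᵐ ω ∂P, 0 < p ω)
    (hp : Measurable[𝓜] p) (ha : Measurable[𝓜] a) (hu : Measurable[𝓜] u)
    (hV : MemLp (aipw R p a u) 2 P) :
    MemLp u 2 P ∧ Integrable (fun ω => (1 - p ω) / p ω * (u ω - a ω) ^ 2) P ∧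
      variance (aipw R p a u) P
        = variance u P + ∫ ω, (1 - p ω) / p ω * (u ω - a ω) ^ 2 ∂P := by
  obtain ⟨hu_L2, hc, hsq⟩ := integral_aipw_sq h𝓜 hR hR01 hRp hp_pos hp ha hu hV
  refine ⟨hu_L2, hc, ?_⟩
  rw [variance_eq_sub hV, variance_eq_sub hu_L2, integral_aipw h𝓜 hR hRp hp_pos hp ha hu
    (hV.integrable one_le_two) (hu_L2.integrable one_le_two)]
  simp only [Pi.pow_apply]
  rw [hsq]
  ring

end MissingAtRandom

theorem aipw_variance_decomposition_mar_general
    {Ω 𝒳 𝒴 : Type*} [MeasurableSpace Ω] [MeasurableSpace 𝒳] [MeasurableSpace 𝒴]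
    (P : Measure Ω) [IsProbabilityMeasure P]
    (X : Ω → 𝒳) (Y : Ω → 𝒴) (R : Ω → ℝ)
    (hX : Measurable X) (hY : Measurable Y) (hR : Measurable R)
    (hR01 : ∀ ω, R ω = 0 ∨ R ω = 1)
    (π₀ : 𝒳 → ℝ) (hπ : Measurable π₀)
    (hπpos : ∀ᵐ ω ∂P, 0 < π₀ (X ω))
    (hMAR : P[R | MeasurableSpace.comap (fun ω => (X ω, Y ω)) inferInstance]
      =ᵐ[P] fun ω => π₀ (X ω))
    (φ : 𝒴 → ℝ) (m m₀ : 𝒳 → ℝ)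
    (hφ : Measurable φ) (hm : Measurable m) (hm₀ : Measurable m₀)
    (hm₀ver : (fun ω => m₀ (X ω))
      =ᵐ[P] P[(fun ω => φ (Y ω)) | MeasurableSpace.comap X inferInstance])
    (hL2m : MemLp (fun ω => m (X ω) + R ω / π₀ (X ω) * (φ (Y ω) - m (X ω))) 2 P)
    (hL2m₀ : MemLp (fun ω => m₀ (X ω) + R ω / π₀ (X ω) * (φ (Y ω) - m₀ (X ω))) 2 P) :
    variance (fun ω => m (X ω) + R ω / π₀ (X ω) * (φ (Y ω) - m (X ω))) P
      = variance (fun ω => m₀ (X ω) + R ω / π₀ (X ω) * (φ (Y ω) - m₀ (X ω))) P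
        + ∫ ω, ((1 - π₀ (X ω)) / π₀ (X ω)) * (m (X ω) - m₀ (X ω)) ^ 2 ∂P := by
  have h𝓜 := (hX.prodMk hY).comap_le
  have hX𝓜 : Measurable[MeasurableSpace.comap (fun ω => (X ω, Y ω)) inferInstance] X :=
    measurable_fst.comp (comap_measurable _)
  have hY𝓜 : Measurable[MeasurableSpace.comap (fun ω => (X ω, Y ω)) inferInstance] Y :=
    measurable_snd.comp (comap_measurable _)
  have hR_mem : ∀ᵐ ω ∂P, R ω ∈ Set.Icc 0 1 :=
    ae_of_all _ fun ω => by rcases hR01 ω with h | h <;> simp [h]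
  have hR_int : Integrable R P := .of_mem_Icc 0 1 hR.aemeasurable hR_mem
  obtain ⟨hφY, hcm, hvar⟩ := variance_aipw_s16 (a := fun ω => m (X ω)) (u := fun ω => φ (Y ω))
    h𝓜 hR_int hR01 hMAR hπpos (hπ.comp hX𝓜) (hm.comp hX𝓜) (hφ.comp hY𝓜) hL2m
  obtain ⟨-, hcm₀, hvar₀⟩ := variance_aipw_s16 (a := fun ω => m₀ (X ω)) (u := fun ω => φ (Y ω))
    h𝓜 hR_int hR01 hMAR hπpos (hπ.comp hX𝓜) (hm₀.comp hX𝓜) (hφ.comp hY𝓜) hL2m₀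
  have hc_nonneg : 0 ≤ᵐ[P] fun ω => (1 - π₀ (X ω)) / π₀ (X ω) := by
    filter_upwards [hπpos, ae_mem_Icc_of_condExp_eq h𝓜 hR_int hR_mem hMAR] with ω hp0 hp1
    exact div_nonneg (sub_nonneg.2 hp1.2) hp0.le
  have hpyth := integral_mul_sq_sub_eq_add_of_condExp_eq hX.comap_le
    (((hπ.const_sub 1).div hπ).comp (comap_measurable X)) hc_nonneg
    (hm.comp (comap_measurable X)) (hm₀.comp (comap_measurable X))
    (hφY.integrable one_le_two) hm₀ver.symm hcm hcm₀
  simp only [Function.comp_apply, Pi.div_apply] at hpyth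
  unfold aipw at hvar hvar₀
  rw [hvar, hvar₀, hpyth]
  ring

/-- Variance decomposition for AIPW estimating functions under missing at
random: with `m₀(X)` a version of `E[φ(Y) | σ(X)]` and `δ = m − m₀`,
`Var[m(X) + (R/π₀(X))·(φ(Y) − m(X))]
  = Var[m₀(X) + (R/π₀(X))·(φ(Y) − m₀(X))]
    + E[((1 − π₀(X))/π₀(X))·δ(X)²]`. -/
theorem aipw_variance_decomposition_mar
    {Ω 𝒳 𝒴 : Type*} [MeasurableSpace Ω] [MeasurableSpace 𝒳] [MeasurableSpace 𝒴]
    (P : Measure Ω) [IsProbabilityMeasure P]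
    (X : Ω → 𝒳) (Y : Ω → 𝒴) (R : Ω → ℝ)
    (hX : Measurable X) (hY : Measurable Y) (hR : Measurable R)
    (hR01 : ∀ ω, R ω = 0 ∨ R ω = 1)
    (π₀ : 𝒳 → ℝ) (hπ : Measurable π₀)
    (hπpos : ∀ᵐ ω ∂P, 0 < π₀ (X ω))
    (hMAR : P[R | MeasurableSpace.comap (fun ω => (X ω, Y ω)) inferInstance]
      =ᵐ[P] fun ω => π₀ (X ω))
    (φ : 𝒴 → ℝ) (m m₀ : 𝒳 → ℝ)
    (hφ : Measurable φ) (hm : Measurable m) (hm₀ : Measurable m₀)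
    (hm₀ver : (fun ω => m₀ (X ω))
      =ᵐ[P] P[(fun ω => φ (Y ω)) | MeasurableSpace.comap X inferInstance])
    (hL2m : MemLp (fun ω => m (X ω) + R ω / π₀ (X ω) * (φ (Y ω) - m (X ω))) 2 P)
    (hL2m₀ : MemLp (fun ω => m₀ (X ω) + R ω / π₀ (X ω) * (φ (Y ω) - m₀ (X ω))) 2 P)
    (hL2δ : MemLp (fun ω =>
      Real.sqrt ((1 - π₀ (X ω)) / π₀ (X ω)) * (m (X ω) - m₀ (X ω))) 2 P) :
    variance (fun ω => m (X ω) + R ω / π₀ (X ω) * (φ (Y ω) - m (X ω))) P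
      = variance (fun ω => m₀ (X ω) + R ω / π₀ (X ω) * (φ (Y ω) - m₀ (X ω))) P
        + ∫ ω, ((1 - π₀ (X ω)) / π₀ (X ω)) * (m (X ω) - m₀ (X ω)) ^ 2 ∂P :=
  aipw_variance_decomposition_mar_general P X Y R hX hY hR hR01 π₀ hπ hπpos hMAR φ m m₀ hφ hm hm₀
    hm₀ver hL2m hL2m₀
end
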